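/- arXiv:1606.08181 — 5 statements merged into one kernel-verified Lean document; each statement's English description precedes it below -/
import Mathlib

section
/- Let Δ be a two-dimensional lattice polygon and let P, Q be distinct lattice points of Δ. If there exists an integer q > 1 such that (qΔ − P) ∩ (qΔ − Q) ⊆ (q−1)Δ, then (qΔ − P) ∩ (qΔ − Q) ⊆ (q−1)Δ holds for every integer q ≥ 1. -/
open scoped Pointwise

noncomputable section

/-- The embedding of the lattice `ℤ²` into `ℝ²`. -/
def ι2 (p : ℤ × ℤ) : ℝ × ℝ := ((p.1 : ℝ), (p.2 : ℝ))

/-- A lattice polygon: the convex hull of a finite set of lattice points. -/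
def IsLatticePolygon (Δ : Set (ℝ × ℝ)) : Prop :=
  ∃ S : Finset (ℤ × ℤ), Δ = convexHull ℝ (ι2 '' ↑S)

/-- The translate `A − P` of a set. -/
def transl (A : Set (ℝ × ℝ)) (P : ℝ × ℝ) : Set (ℝ × ℝ) := (fun x => x - P) '' A

/-!
Let `Δ` be convex and compact, and call `(qΔ − p) ∩ (qΔ − r)` the intersection at level `q`.
Suppose it lies in `(q₀ − 1)Δ`. If `q ≥ q₀`, shrink a point `x` of the intersection at level `q` by
`α = (q₀ − 1)/(q − 1)`: convexity puts `αx` in the intersection at level `q₀`, hence in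
`(q₀ − 1)Δ = α(q − 1)Δ`. If `1 ≤ q < q₀`, put `c = q₀ − q`; then for every `z ∈ Δ` the point
`x + cz` lies in the intersection at level `q₀`, so `x + cΔ ⊆ (q − 1)Δ + cΔ`, and the compact
summand `cΔ` cancels from such an inclusion by a separating functional.
-/

section

variable {E : Type*} [AddCommGroup E] [Module ℝ E]

/-- `(qΔ − p) ∩ (qΔ − r) ⊆ (q − 1)Δ`. -/
def TranslateIntersectionSubset (Δ : Set E) (p r : E) (q : ℝ) : Prop :=
  ∀ x, x + p ∈ q • Δ → x + r ∈ q • Δ → x ∈ (q - 1) • Δ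

variable {Δ : Set E}

lemma Convex.add_mem_add_smul (hΔ : Convex ℝ Δ) {a b : ℝ} (ha : 0 ≤ a) (hb : 0 ≤ b)
    {u w : E} (hu : u ∈ a • Δ) (hw : w ∈ b • Δ) : u + w ∈ (a + b) • Δ :=
  hΔ.add_smul ha hb ▸ Set.add_mem_add hu hw

lemma Convex.smul_add_mem_smul (hΔ : Convex ℝ Δ) {w x : E} (hw : w ∈ Δ) {α q : ℝ}
    (hα₀ : 0 ≤ α) (hα₁ : α ≤ 1) (hq : 0 ≤ q) (hx : x + w ∈ q • Δ) :
    α • x + w ∈ (α * q + (1 - α)) • Δ := by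
  have h := hΔ.add_mem_add_smul (mul_nonneg hα₀ hq) (sub_nonneg.2 hα₁)
    (by rw [mul_smul]; exact Set.smul_mem_smul_set hx) (Set.smul_mem_smul_set hw)
  rwa [smul_add, add_assoc, ← add_smul, add_sub_cancel, one_smul] at h

lemma TranslateIntersectionSubset.of_le {p r : E} {q₀ q : ℝ} (hΔ : Convex ℝ Δ) (hp : p ∈ Δ)
    (hr : r ∈ Δ) (hq₀ : 1 < q₀) (h : TranslateIntersectionSubset Δ p r q₀) (hle : q₀ ≤ q) :
    TranslateIntersectionSubset Δ p r q := by
  intro x hxp hxr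
  have hq : 0 < q - 1 := by linarith
  set α := (q₀ - 1) / (q - 1)
  have hα₀ : 0 < α := div_pos (by linarith) hq
  have hα₁ : α ≤ 1 := (div_le_one hq).2 (by linarith)
  have hαq : α * (q - 1) = q₀ - 1 := div_mul_cancel₀ _ hq.ne'
  have hlevel : α * q + (1 - α) = q₀ := by linear_combination hαq
  have hαx : α • x ∈ (q₀ - 1) • Δ := h _
    (hlevel ▸ hΔ.smul_add_mem_smul hp hα₀.le hα₁ (by linarith) hxp)
    (hlevel ▸ hΔ.smul_add_mem_smul hr hα₀.le hα₁ (by linarith) hxr)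
  rw [← hαq, mul_smul] at hαx
  exact (Set.smul_mem_smul_set_iff₀ hα₀.ne' _ _).1 hαx

variable [TopologicalSpace E] [IsTopologicalAddGroup E] [ContinuousSMul ℝ E]
  [LocallyConvexSpace ℝ E]

theorem Convex.mem_of_vadd_subset_add {B K : Set E} (hB : Convex ℝ B) (hBc : IsClosed B)
    (hK : IsCompact K) (hKne : K.Nonempty) {x : E} (h : x +ᵥ K ⊆ B + K) : x ∈ B := by
  by_contra hx
  obtain ⟨f, u, hfB, hfx⟩ := geometric_hahn_banach_closed_point hB hBc hx
  obtain ⟨z, hz, hzmax⟩ := hK.exists_isMaxOn hKne f.continuous.continuousOn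
  obtain ⟨b, hb, w, hw, hbw⟩ := h (Set.vadd_mem_vadd_set hz)
  have hf : f b + f w = f x + f z := by
    rw [← map_add, ← map_add]; exact congrArg f hbw
  linarith [hfB b hb, show f w ≤ f z from hzmax hw]

lemma TranslateIntersectionSubset.of_ge [T2Space E] {p r : E} {q₀ q : ℝ} (hΔ : Convex ℝ Δ)
    (hΔc : IsCompact Δ) (hne : Δ.Nonempty) (h : TranslateIntersectionSubset Δ p r q₀)
    (hq : 1 ≤ q) (hle : q ≤ q₀) : TranslateIntersectionSubset Δ p r q := by
  intro x hxp hxr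
  set c := q₀ - q
  have hc : 0 ≤ c := sub_nonneg.2 hle
  have hlevel : q + c = q₀ := add_sub_cancel q q₀
  refine (hΔ.smul (q - 1)).mem_of_vadd_subset_add (hΔc.smul (q - 1)).isClosed (hΔc.smul c)
    (hne.smul_set) ?_
  rintro _ ⟨_, ⟨z, hz, rfl⟩, rfl⟩
  have hshift : ∀ w, x + w ∈ q • Δ → x + c • z + w ∈ q₀ • Δ := fun w hw => by
    rw [add_right_comm, ← hlevel]
    exact hΔ.add_mem_add_smul (by linarith) hc hw (Set.smul_mem_smul_set hz)
  have hmem := h _ (hshift p hxp) (hshift r hxr)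
  rw [show q₀ - 1 = q - 1 + c by rw [← hlevel]; ring, hΔ.add_smul (by linarith) hc] at hmem
  exact hmem

lemma TranslateIntersectionSubset.of_one_lt [T2Space E] {p r : E} {q₀ q : ℝ}
    (hΔ : Convex ℝ Δ) (hΔc : IsCompact Δ) (hp : p ∈ Δ) (hr : r ∈ Δ) (hq₀ : 1 < q₀)
    (h : TranslateIntersectionSubset Δ p r q₀) (hq : 1 ≤ q) :
    TranslateIntersectionSubset Δ p r q :=
  (le_total q₀ q).elim (h.of_le hΔ hp hr hq₀) (h.of_ge hΔ hΔc ⟨p, hp⟩ hq)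

end

lemma mem_transl {A : Set (ℝ × ℝ)} {p x : ℝ × ℝ} : x ∈ transl A p ↔ x + p ∈ A :=
  ⟨by rintro ⟨y, hy, rfl⟩; simpa using hy, fun h => ⟨x + p, h, add_sub_cancel_right x p⟩⟩

lemma translateIntersectionSubset_iff {Δ : Set (ℝ × ℝ)} {p r : ℝ × ℝ} {q : ℝ} :
    TranslateIntersectionSubset Δ p r q ↔ transl (q • Δ) p ∩ transl (q • Δ) r ⊆ (q - 1) • Δ :=
  ⟨fun h _ hx => h _ (mem_transl.1 hx.1) (mem_transl.1 hx.2),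
    fun h _ hp hr => h ⟨mem_transl.2 hp, mem_transl.2 hr⟩⟩

theorem stmt0_general (Δ : Set (ℝ × ℝ)) (hΔ : IsLatticePolygon Δ)
    (P Q : ℤ × ℤ) (hP : ι2 P ∈ Δ) (hQ : ι2 Q ∈ Δ)
    (hex : ∃ q : ℕ, 1 < q ∧
      transl ((q : ℝ) • Δ) (ι2 P) ∩ transl ((q : ℝ) • Δ) (ι2 Q) ⊆ ((q : ℝ) - 1) • Δ) :
    ∀ q : ℕ, 1 ≤ q →
      transl ((q : ℝ) • Δ) (ι2 P) ∩ transl ((q : ℝ) • Δ) (ι2 Q) ⊆ ((q : ℝ) - 1) • Δ := by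
  obtain ⟨S, rfl⟩ := hΔ
  have hconv := convex_convexHull ℝ (ι2 '' ↑S)
  have hcomp := (S.finite_toSet.image ι2).isCompact_convexHull (𝕜 := ℝ)
  obtain ⟨q₀, hq₀, hsub⟩ := hex
  intro q hq
  exact translateIntersectionSubset_iff.1 <|
    (translateIntersectionSubset_iff.2 hsub).of_one_lt hconv hcomp hP hQ
      (by exact_mod_cast hq₀) (by exact_mod_cast hq)

/-- if `(qΔ − P) ∩ (qΔ − Q) ⊆ (q−1)Δ` holds for some integer `q > 1`,
then it holds for every integer `q ≥ 1`. -/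
theorem stmt0 (Δ : Set (ℝ × ℝ)) (hΔ : IsLatticePolygon Δ) (h2 : (interior Δ).Nonempty)
    (P Q : ℤ × ℤ) (hP : ι2 P ∈ Δ) (hQ : ι2 Q ∈ Δ) (hPQ : P ≠ Q)
    (hex : ∃ q : ℕ, 1 < q ∧
      transl ((q : ℝ) • Δ) (ι2 P) ∩ transl ((q : ℝ) • Δ) (ι2 Q) ⊆ ((q : ℝ) - 1) • Δ) :
    ∀ q : ℕ, 1 ≤ q →
      transl ((q : ℝ) • Δ) (ι2 P) ∩ transl ((q : ℝ) • Δ) (ι2 Q) ⊆ ((q : ℝ) - 1) • Δ :=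
  stmt0_general Δ hΔ P Q hP hQ hex
end
end

section
/- Let Δ be a two-dimensional lattice polygon and let P, Q be distinct lattice points of Δ. If for every integer q ≥ 1 one has (qΔ − P) ∩ (qΔ − Q) ∩ ℤ² ⊆ (q−1)Δ, then Δ is a (possibly degenerate) quadrangle with opposite vertices P and Q. -/
open scoped Pointwise

noncomputable section

/-- `Δ` is a (possibly degenerate) quadrangle with opposite vertices `P` and `Q`:
for each of the two closed half-planes `H` bounded by the line through `P` and `Q`
(equivalently, for every nonzero linear form `f` with `f P = f Q`, taking
`H = {x | f x ≤ f P}`), there is a point `T` with `H ∩ Δ = conv{P, Q, T}`. -/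
def IsQuadrangleOpp (Δ : Set (ℝ × ℝ)) (P Q : ℝ × ℝ) : Prop :=
  ∀ f : (ℝ × ℝ) →ₗ[ℝ] ℝ, f ≠ 0 → f P = f Q →
    ∃ T : ℝ × ℝ, {x | f x ≤ f P} ∩ Δ = convexHull ℝ {P, Q, T}

/-!
If `Δ` contained a point `Q + s • (Q - P)` with `s > 0`, the lattice point `n • Q + (Q - P)`
would lie in `((n + 1)Δ - P) ∩ ((n + 1)Δ - Q)`, hence in `nΔ`; this moves the point
`Q + (Q - P) / (n + 1)` of `Δ` out to `Q + (Q - P) / n`, and descending to `n = 0` forces `P = Q`.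
So `Δ` meets the line `PQ` in the segment `[P, Q]`. If an edge of `Δ` through lattice points
`u`, `v`, on a supporting line `g = m`, missed both `P` and `Q`, say `g Q ≤ g P < m`, then for
large even `n = 2r` the lattice point `r • (u + v) - P` lies in `(nΔ - P) ∩ (nΔ - Q)`, while `g`
exceeds `(n - 1) m` on it. So every edge of `Δ` passes through `P` or `Q`.

On one side of the line `PQ`, let `t` be a vertex of `Δ` farthest from the line; it is unique,
since otherwise the parallel edge through it would miss `P` and `Q`. If a vertex on that side lay
outside the triangle `PQt`, rotating the line `tQ` (or `tP`) about `t` towards it would produce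
an edge through `t` missing `P` and `Q`. Hence that half of `Δ` is the triangle `PQt`.
-/

theorem Module.Dual.exists_smul_eq_of_apply_eq_zero {K V : Type*} [Field K] [AddCommGroup V]
    [Module K V] [FiniteDimensional K V] (hV : Module.finrank K V = 2)
    {f : Module.Dual K V} (hf : f ≠ 0) {d x : V} (hd : d ≠ 0) (hfd : f d = 0) (hfx : f x = 0) :
    ∃ s : K, s • d = x := by
  have hker : Module.finrank K (LinearMap.ker f) = 1 := by
    have := Module.Dual.finrank_ker_add_one_of_ne_zero hf
    omega
  obtain ⟨s, hs⟩ := (finrank_eq_one_iff_of_nonzero' (⟨d, hfd⟩ : LinearMap.ker f)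
    (by simpa [Subtype.ext_iff] using hd)).1 hker ⟨x, hfx⟩
  exact ⟨s, congrArg Subtype.val hs⟩

section Convexity

variable {E : Type*} [AddCommGroup E] [Module ℝ E]

theorem Convex.smul_add_smul_add_smul_mem {s : Set E} (hs : Convex ℝ s) {x y z : E}
    (hx : x ∈ s) (hy : y ∈ s) (hz : z ∈ s) {a b c : ℝ} (ha : 0 ≤ a) (hb : 0 ≤ b) (hc : 0 ≤ c)
    (habc : a + b + c = 1) :
    a • x + b • y + c • z ∈ s := by
  have := hs.sum_mem (t := Finset.univ) (w := ![a, b, c]) (z := ![x, y, z])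
    (by simp [Fin.forall_fin_succ, ha, hb, hc]) (by simp [Fin.sum_univ_three, habc])
    (by simp [Fin.forall_fin_succ, hx, hy, hz])
  simpa [Fin.sum_univ_three, add_assoc] using this

theorem Convex.midpoint_add_smul_mem {C : Set E} (hC : Convex ℝ C) {u v P : E} (hu : u ∈ C)
    (hv : v ∈ C) (hP : P ∈ C) {s t n : ℝ} (ht : 0 ≤ t) (hn : 0 < n) (htn : 2 * (t + 2 * |s|) ≤ n) :
    (1 / 2 : ℝ) • u + (1 / 2 : ℝ) • v +
      (1 / n) • (s • (v - u) + t • (P - ((1 / 2 : ℝ) • u + (1 / 2 : ℝ) • v))) ∈ C := by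
  convert hC.smul_add_smul_add_smul_mem hP hu hv (a := t / n)
    (b := (n - t - 2 * s) / (2 * n)) (c := (n - t + 2 * s) / (2 * n)) (div_nonneg ht hn.le)
    (div_nonneg (by linarith [le_abs_self s]) (by positivity))
    (div_nonneg (by linarith [neg_abs_le s]) (by positivity)) (by field_simp; ring) using 1
  match_scalars <;> field_simp <;> ring

theorem LinearMap.exists_apply_add_smul_sub_eq (f : E →ₗ[ℝ] ℝ) {y z : E} {c : ℝ}
    (hy : f y < c) (hz : c ≤ f z) :
    ∃ l ∈ Set.Ioc (0 : ℝ) 1, f (y + l • (z - y)) = c ∧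
      ∀ θ : ℝ, f (y + θ • (z - y)) ≤ c → θ ≤ l := by
  have hyz : 0 < f z - f y := by linarith
  have hf : ∀ θ : ℝ, f (y + θ • (z - y)) = f y + θ * (f z - f y) := by
    intro θ; simp only [map_add, map_smul, map_sub, smul_eq_mul]
  refine ⟨(c - f y) / (f z - f y), ⟨div_pos (by linarith) hyz, ?_⟩, ?_, fun θ hθ => ?_⟩
  · rw [div_le_one hyz]; linarith
  · rw [hf, div_mul_cancel₀ _ hyz.ne']; ring
  · rw [hf] at hθ
    rw [le_div_iff₀ hyz]; linarith

theorem Convex.apply_le_of_apply_le_on_level {C : Set E} (hC : Convex ℝ C)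
    {f g : E →ₗ[ℝ] ℝ} {c m : ℝ} (hlevel : ∀ y ∈ C, f y = c → g y ≤ m) {w x : E}
    (hw : w ∈ C) (hx : x ∈ C) (hfw : f w < c) (hfx : c ≤ f x) (hgw : g w = m) :
    g x ≤ m := by
  obtain ⟨l, ⟨hl0, hl1⟩, hfl, -⟩ := f.exists_apply_add_smul_sub_eq hfw hfx
  have hgl := hlevel _ (hC.add_smul_sub_mem hw hx ⟨hl0.le, hl1⟩) hfl
  simp only [map_add, map_smul, map_sub, smul_eq_mul, hgw] at hgl
  nlinarith

theorem convexHull_inter_halfSpace_subset (s : Set E) (f : E →ₗ[ℝ] ℝ) (c : ℝ) :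
    convexHull ℝ s ∩ {x | f x ≤ c} ⊆
      convexHull ℝ ({x ∈ s | f x < c} ∪ {x ∈ convexHull ℝ s | f x = c}) := by
  rintro x ⟨hx, hfx : f x ≤ c⟩
  set A := {x ∈ s | f x < c}
  set B := {x ∈ s | c ≤ f x}
  have hlevel : ∀ y ∈ convexHull ℝ s, f y = c →
      y ∈ convexHull ℝ (A ∪ {x ∈ convexHull ℝ s | f x = c}) :=
    fun y hy hfy => subset_convexHull ℝ _ (Or.inr ⟨hy, hfy⟩)
  have hAB : s = A ∪ B := by
    ext y; simp [A, B, ← and_or_left, lt_or_ge]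
  have hB : ∀ z ∈ convexHull ℝ B, c ≤ f z :=
    fun z hz => convexHull_min (fun _ h => h.2) (convex_halfSpace_ge f.isLinear c) hz
  rcases A.eq_empty_or_nonempty with hAe | hAne
  · have hxB : x ∈ convexHull ℝ B := by rwa [hAB, hAe, Set.empty_union] at hx
    exact hlevel x hx (le_antisymm hfx (hB x hxB))
  rcases B.eq_empty_or_nonempty with hBe | hBne
  · rw [hAB, hBe, Set.union_empty] at hx
    exact convexHull_mono Set.subset_union_left hx
  have hsA : convexHull ℝ A ⊆ convexHull ℝ s := convexHull_mono (hAB ▸ Set.subset_union_left)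
  have hsB : convexHull ℝ B ⊆ convexHull ℝ s := convexHull_mono (hAB ▸ Set.subset_union_right)
  rw [hAB, convexHull_union hAne hBne, mem_convexJoin] at hx
  obtain ⟨y, hy, z, hz, hxyz⟩ := hx
  rw [segment_eq_image'] at hxyz
  obtain ⟨θ, ⟨hθ0, -⟩, rfl⟩ := hxyz
  beta_reduce at hfx ⊢
  have hfy : f y < c := convexHull_min (fun _ h => h.2) (convex_halfSpace_lt f.isLinear c) hy
  obtain ⟨l, ⟨hl0, hl1⟩, hfl, hθl⟩ := f.exists_apply_add_smul_sub_eq hfy (hB z hz)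
  have hw := (convex_convexHull ℝ s).add_smul_sub_mem (hsA hy) (hsB hz) ⟨hl0.le, hl1⟩
  have hxw : y + θ • (z - y) = y + (θ / l) • (y + l • (z - y) - y) := by
    rw [add_sub_cancel_left, smul_smul, div_mul_cancel₀ _ hl0.ne']
  rw [hxw]
  refine (convex_convexHull ℝ _).add_smul_sub_mem
    (convexHull_mono Set.subset_union_left hy) (hlevel _ hw hfl) ⟨by positivity, ?_⟩
  rw [div_le_one hl0]
  exact hθl θ hfx

theorem halfSpace_inter_convexHull_eq_convexHull_triple {s : Set E} {f : E →ₗ[ℝ] ℝ} {P Q T : E}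
    (hlevel : ∀ x ∈ convexHull ℝ s, f x = f P → x ∈ segment ℝ P Q) (hP : P ∈ convexHull ℝ s)
    (hQ : Q ∈ convexHull ℝ s) (hT : T ∈ convexHull ℝ s) (hfQ : f Q = f P) (hfT : f T ≤ f P)
    (hs : ∀ p ∈ s, f p < f P → p ∈ convexHull ℝ {P, Q, T}) :
    {x | f x ≤ f P} ∩ convexHull ℝ s = convexHull ℝ {P, Q, T} := by
  apply subset_antisymm
  · rw [Set.inter_comm]
    refine (convexHull_inter_halfSpace_subset s f (f P)).trans
      (convexHull_min ?_ (convex_convexHull ℝ _))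
    rintro x (⟨hx, hfx⟩ | ⟨hx, hfx⟩)
    · exact hs x hx hfx
    · exact segment_subset_convexHull (by simp) (by simp) (hlevel x hx hfx)
  · refine convexHull_min ?_ ((convex_halfSpace_le f.isLinear _).inter (convex_convexHull ℝ s))
    rintro x (rfl | rfl | rfl)
    exacts [⟨le_refl (f x), hP⟩, ⟨hfQ.le, hQ⟩, ⟨hfT, hT⟩]

theorem Finset.exists_supporting_sub_smul (A : Finset E) (f k : E →ₗ[ℝ] ℝ) {T : E}
    (hA : ∀ x ∈ A, f T < f x) {s : E} (hs : s ∈ A) (hks : k T < k s) :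
    ∃ v ∈ A, ∃ ρ : ℝ, 0 < ρ ∧ (k - ρ • f) v = (k - ρ • f) T ∧
      ∀ x ∈ A, (k - ρ • f) x ≤ (k - ρ • f) T := by
  obtain ⟨v, hv, hmax⟩ := A.exists_max_image (fun x => (k x - k T) / (f x - f T)) ⟨s, hs⟩
  have hfv : 0 < f v - f T := sub_pos.2 (hA v hv)
  refine ⟨v, hv, _, (div_pos (sub_pos.2 hks) (sub_pos.2 (hA s hs))).trans_le (hmax s hs), ?_,
    fun x hx => ?_⟩
  · simp only [LinearMap.sub_apply, LinearMap.smul_apply, smul_eq_mul]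
    field_simp
    ring
  · have hx := (div_le_iff₀ (sub_pos.2 (hA x hx))).1 (hmax x hx)
    simp only [LinearMap.sub_apply, LinearMap.smul_apply, smul_eq_mul]
    linarith

theorem linearIndependent_pair_sub_of_apply_eq {f : E →ₗ[ℝ] ℝ} {P Q T : E} (hPQ : P ≠ Q)
    (hfPQ : f P = f Q) (hfT : f T ≠ f P) : LinearIndependent ℝ ![P - T, Q - T] := by
  rw [LinearIndependent.pair_iff]
  intro a b hab
  have hf' := congrArg f hab
  simp only [map_add, map_smul, map_sub, smul_eq_mul, map_zero, ← hfPQ, ← add_mul] at hf'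
  have hb : b = -a := by
    rcases mul_eq_zero.1 hf' with h | h
    · linarith
    · exact absurd (sub_eq_zero.1 h).symm hfT
  rw [hb, neg_smul, ← sub_eq_add_neg, ← smul_sub, sub_sub_sub_cancel_right, smul_eq_zero,
    sub_eq_zero] at hab
  have ha : a = 0 := hab.resolve_right hPQ
  exact ⟨ha, by rw [hb, ha, neg_zero]⟩

end Convexity

theorem ι2_injective : Function.Injective ι2 := by
  intro a b h
  simp only [ι2, Prod.ext_iff, Int.cast_inj] at h
  exact Prod.ext h.1 h.2

@[simp] theorem ι2_add (a b : ℤ × ℤ) : ι2 (a + b) = ι2 a + ι2 b := by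
  simp [ι2]

@[simp] theorem ι2_sub (a b : ℤ × ℤ) : ι2 (a - b) = ι2 a - ι2 b := by
  simp [ι2]

theorem ι2_nsmul (n : ℕ) (a : ℤ × ℤ) : ι2 (n • a) = (n : ℝ) • ι2 a := by
  simp [ι2]

def DilationCondition (Δ : Set (ℝ × ℝ)) (P Q : ℤ × ℤ) : Prop :=
  ∀ q : ℕ, 1 ≤ q →
    transl ((q : ℝ) • Δ) (ι2 P) ∩ transl ((q : ℝ) • Δ) (ι2 Q) ∩ Set.range ι2 ⊆ ((q : ℝ) - 1) • Δ

theorem apply_le_of_mem_convexHull_image {S : Finset (ℤ × ℤ)} {g : (ℝ × ℝ) →ₗ[ℝ] ℝ} {m : ℝ}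
    (hS : ∀ p ∈ S, g (ι2 p) ≤ m) {x : ℝ × ℝ} (hx : x ∈ convexHull ℝ (ι2 '' ↑S)) : g x ≤ m :=
  convexHull_min (by rintro _ ⟨p, hp, rfl⟩; exact hS p hp) (convex_halfSpace_le g.isLinear m) hx

namespace DilationCondition

variable {P Q : ℤ × ℤ}

section Polygon

variable {Δ : Set (ℝ × ℝ)}

theorem symm (h : DilationCondition Δ P Q) : DilationCondition Δ Q P :=
  fun q hq _ hz => h q hq ⟨⟨hz.1.2, hz.1.1⟩, hz.2⟩

theorem exists_eq_smul (h : DilationCondition Δ P Q) {q : ℕ} (hq : 1 ≤ q) {z : ℤ × ℤ}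
    {x y : ℝ × ℝ} (hx : x ∈ Δ) (hy : y ∈ Δ) (hzP : ι2 z + ι2 P = (q : ℝ) • x)
    (hzQ : ι2 z + ι2 Q = (q : ℝ) • y) : ∃ w ∈ Δ, ((q : ℝ) - 1) • w = ι2 z :=
  h q hq ⟨⟨⟨_, Set.smul_mem_smul_set hx, by simp [← hzP]⟩,
    ⟨_, Set.smul_mem_smul_set hy, by simp [← hzQ]⟩⟩, z, rfl⟩

theorem add_smul_sub_notMem (h : DilationCondition Δ P Q) (hΔ : Convex ℝ Δ)
    (hQ : ι2 Q ∈ Δ) (hPQ : P ≠ Q) {s : ℝ} (hs : 0 < s) :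
    ι2 Q + s • (ι2 Q - ι2 P) ∉ Δ := by
  set d := ι2 Q - ι2 P
  have hd : d ≠ 0 := sub_ne_zero.2 (ι2_injective.ne hPQ.symm)
  have step : ∀ n : ℕ, ι2 Q + (1 / ((n : ℝ) + 1)) • d ∈ Δ →
      ∃ w ∈ Δ, (n : ℝ) • w = (n : ℝ) • ι2 Q + d := by
    intro n hn
    obtain ⟨w, hw, hzw⟩ := h.exists_eq_smul (q := n + 1) (z := n • Q + (Q - P)) le_add_self
      hQ hn (by simp only [ι2_add, ι2_sub, ι2_nsmul]; push_cast; module)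
      (by simp only [ι2_add, ι2_sub, ι2_nsmul]; push_cast; match_scalars <;> field_simp)
    simp only [ι2_add, ι2_sub, ι2_nsmul, Nat.cast_add, Nat.cast_one, add_sub_cancel_right] at hzw
    exact ⟨w, hw, hzw⟩
  have hnot : ∀ n : ℕ, ι2 Q + (1 / ((n : ℝ) + 1)) • d ∉ Δ := by
    intro n
    induction n with
    | zero =>
      intro hn
      obtain ⟨w, -, hw⟩ := step 0 hn
      exact hd (by simpa using hw.symm)
    | succ n ih =>
      intro hn
      obtain ⟨w, hw, hzw⟩ := step (n + 1) hn
      have hw' : w = ι2 Q + (1 / ((n : ℝ) + 1)) • d := by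
        have hn0 : ((n : ℝ) + 1) ≠ 0 := by positivity
        rw [← smul_right_injective _ hn0 |>.eq_iff]
        push_cast at hzw
        rw [hzw]
        match_scalars <;> field_simp
      exact ih (hw' ▸ hw)
  intro hs'
  obtain ⟨n, hn⟩ := exists_nat_one_div_lt hs
  apply hnot n
  have := hΔ.add_smul_sub_mem hQ hs' (t := (1 / ((n : ℝ) + 1)) / s)
    ⟨by positivity, by rw [div_le_one hs]; exact hn.le⟩
  rwa [add_sub_cancel_left, smul_smul, div_mul_cancel₀ _ hs.ne'] at this

theorem mem_segment_of_apply_eq (h : DilationCondition Δ P Q) (hΔ : Convex ℝ Δ)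
    (hP : ι2 P ∈ Δ) (hQ : ι2 Q ∈ Δ) (hPQ : P ≠ Q) {f : (ℝ × ℝ) →ₗ[ℝ] ℝ} (hf : f ≠ 0)
    (hfPQ : f (ι2 P) = f (ι2 Q)) {x : ℝ × ℝ} (hx : x ∈ Δ) (hfx : f x = f (ι2 P)) :
    x ∈ segment ℝ (ι2 P) (ι2 Q) := by
  obtain ⟨s, hs⟩ := Module.Dual.exists_smul_eq_of_apply_eq_zero (by simp) hf
    (sub_ne_zero.2 (ι2_injective.ne hPQ.symm)) (by simp [hfPQ]) (x := x - ι2 P) (by simp [hfx])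
  have hxs : x = ι2 P + s • (ι2 Q - ι2 P) := by rw [hs]; abel
  rw [segment_eq_image']
  refine ⟨s, ⟨not_lt.1 fun hs0 => ?_, not_lt.1 fun hs1 => ?_⟩, hxs.symm⟩
  · refine h.symm.add_smul_sub_notMem hΔ hP hPQ.symm (neg_pos.2 hs0) ?_
    convert hx using 1
    rw [hxs]; module
  · refine h.add_smul_sub_notMem hΔ hQ hPQ (sub_pos.2 hs1) ?_
    convert hx using 1
    rw [hxs]; module

theorem apply_eq_of_apply_le_apply (h : DilationCondition Δ P Q) (hΔ : Convex ℝ Δ)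
    (hP : ι2 P ∈ Δ) {u v : ℤ × ℤ} (hu : ι2 u ∈ Δ) (hv : ι2 v ∈ Δ) (huv : u ≠ v)
    {g : (ℝ × ℝ) →ₗ[ℝ] ℝ} {m : ℝ} (hg : ∀ x ∈ Δ, g x ≤ m) (hgu : g (ι2 u) = m)
    (hgv : g (ι2 v) = m) (hgQ : g (ι2 Q) ≤ g (ι2 P)) : g (ι2 P) = m := by
  by_contra hne
  have hδ : 0 < m - g (ι2 P) := sub_pos.2 (lt_of_le_of_ne (hg _ hP) hne)
  set x₀ : ℝ × ℝ := (1 / 2 : ℝ) • ι2 u + (1 / 2 : ℝ) • ι2 v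
  have hx₀ : x₀ ∈ Δ := hΔ hu hv (by norm_num) (by norm_num) (by norm_num)
  have hgx₀ : g x₀ = m := by simp [x₀, hgu, hgv]; ring
  set t := (g (ι2 P) - g (ι2 Q)) / (m - g (ι2 P))
  have ht : 0 ≤ t := div_nonneg (sub_nonneg.2 hgQ) hδ.le
  have hg0 : g ≠ 0 := by rintro rfl; simp at hgu; simp [← hgu] at hδ
  -- `Q - P = s • (v - u) + t • (P - x₀)` with `t ≥ 0`, so `x₀ + (Q - P) / n ∈ Δ` for large `n`
  obtain ⟨s, hs⟩ := Module.Dual.exists_smul_eq_of_apply_eq_zero (by simp) hg0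
    (d := ι2 v - ι2 u) (x := (ι2 Q - ι2 P) - t • (ι2 P - x₀))
    (sub_ne_zero.2 (ι2_injective.ne huv.symm)) (by simp [hgu, hgv])
    (by simp only [map_sub, map_smul, hgx₀, smul_eq_mul, t]; field_simp; ring)
  obtain ⟨r, hr⟩ := exists_nat_ge (t + 2 * |s| + 1)
  set n : ℝ := 2 * r
  have hn : 2 ≤ n := by simp only [n]; linarith [abs_nonneg s]
  have hy : x₀ + (1 / n) • (ι2 Q - ι2 P) ∈ Δ := by
    have := hΔ.midpoint_add_smul_mem hu hv hP ht (s := s) (n := n) (by linarith)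
      (by simp only [n]; linarith)
    rwa [hs, sub_add_cancel] at this
  have hr1 : 1 ≤ r := by exact_mod_cast (by linarith [abs_nonneg s] : (1 : ℝ) ≤ r)
  have hzP : ι2 (r • (u + v) - P) + ι2 P = ((2 * r : ℕ) : ℝ) • x₀ := by
    simp only [ι2_add, ι2_sub, ι2_nsmul, x₀]; push_cast; module
  have hzQ : ι2 (r • (u + v) - P) + ι2 Q =
      ((2 * r : ℕ) : ℝ) • (x₀ + (1 / n) • (ι2 Q - ι2 P)) := by
    simp only [ι2_add, ι2_sub, ι2_nsmul, x₀, n]; push_cast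
    match_scalars <;> field_simp
  obtain ⟨w, hw, hzw⟩ := h.exists_eq_smul (by omega) hx₀ hy hzP hzQ
  have hgz := congrArg g hzw
  simp only [ι2_add, ι2_sub, ι2_nsmul, map_sub, map_smul, map_add, hgu, hgv, smul_eq_mul] at hgz
  push_cast at hgz
  nlinarith [mul_le_mul_of_nonneg_left (hg w hw) (by linarith : (0 : ℝ) ≤ n - 1)]

theorem apply_eq_or_apply_eq (h : DilationCondition Δ P Q) (hΔ : Convex ℝ Δ)
    (hP : ι2 P ∈ Δ) (hQ : ι2 Q ∈ Δ) {u v : ℤ × ℤ} (hu : ι2 u ∈ Δ) (hv : ι2 v ∈ Δ) (huv : u ≠ v)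
    {g : (ℝ × ℝ) →ₗ[ℝ] ℝ} {m : ℝ} (hg : ∀ x ∈ Δ, g x ≤ m) (hgu : g (ι2 u) = m)
    (hgv : g (ι2 v) = m) : g (ι2 P) = m ∨ g (ι2 Q) = m := by
  rcases le_total (g (ι2 Q)) (g (ι2 P)) with hle | hle
  · exact .inl (h.apply_eq_of_apply_le_apply hΔ hP hu hv huv hg hgu hgv hle)
  · exact .inr (h.symm.apply_eq_of_apply_le_apply hΔ hQ hu hv huv hg hgu hgv hle)

end Polygon

variable {S : Finset (ℤ × ℤ)}

theorem eq_of_apply_eq_min (h : DilationCondition (convexHull ℝ (ι2 '' ↑S)) P Q)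
    (hP : ι2 P ∈ convexHull ℝ (ι2 '' ↑S)) (hQ : ι2 Q ∈ convexHull ℝ (ι2 '' ↑S))
    {f : (ℝ × ℝ) →ₗ[ℝ] ℝ} (hfPQ : f (ι2 P) = f (ι2 Q)) {t : ℤ × ℤ} (ht : t ∈ S)
    (htmin : ∀ p ∈ S, f (ι2 t) ≤ f (ι2 p)) (htP : f (ι2 t) < f (ι2 P)) {p : ℤ × ℤ}
    (hp : p ∈ S) (hpt : f (ι2 p) = f (ι2 t)) : p = t := by
  by_contra hne
  have hmem : ∀ q ∈ S, ι2 q ∈ convexHull ℝ (ι2 '' ↑S) :=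
    fun q hq => subset_convexHull ℝ _ ⟨q, hq, rfl⟩
  rcases h.apply_eq_or_apply_eq (convex_convexHull ℝ _) hP hQ (hmem t ht) (hmem p hp)
    (Ne.symm hne) (g := -f)
    (fun _ => apply_le_of_mem_convexHull_image fun q hq => neg_le_neg (htmin q hq))
    rfl (by simp [hpt]) with h' | h' <;> simp at h' <;> linarith

theorem apply_le_of_apply_lt (h : DilationCondition (convexHull ℝ (ι2 '' ↑S)) P Q)
    (hP : ι2 P ∈ convexHull ℝ (ι2 '' ↑S)) (hQ : ι2 Q ∈ convexHull ℝ (ι2 '' ↑S)) (hPQ : P ≠ Q)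
    {f : (ℝ × ℝ) →ₗ[ℝ] ℝ} (hf : f ≠ 0) (hfPQ : f (ι2 P) = f (ι2 Q)) {t : ℤ × ℤ} (ht : t ∈ S)
    (htmin : ∀ p ∈ S, p ≠ t → f (ι2 t) < f (ι2 p)) (htP : f (ι2 t) < f (ι2 P))
    {k : (ℝ × ℝ) →ₗ[ℝ] ℝ} (hkP : k (ι2 P) ≤ k (ι2 t)) (hkQ : k (ι2 Q) ≤ k (ι2 t))
    {p : ℤ × ℤ} (hp : p ∈ S) (hfp : f (ι2 p) < f (ι2 P)) : k (ι2 p) ≤ k (ι2 t) := by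
  by_contra! hlt
  have hΔ := convex_convexHull ℝ (ι2 '' ↑S)
  have hmem : ∀ q ∈ S, ι2 q ∈ convexHull ℝ (ι2 '' ↑S) :=
    fun q hq => subset_convexHull ℝ _ ⟨q, hq, rfl⟩
  set A := (S.filter fun q => f (ι2 q) < f (ι2 P) ∧ q ≠ t).image ι2
  have hpt : p ≠ t := by rintro rfl; exact lt_irrefl _ hlt
  obtain ⟨_, hvA, ρ, hρ, hgv, hgA⟩ := A.exists_supporting_sub_smul f k (T := ι2 t)
    (by simp only [A, Finset.mem_image, Finset.mem_filter]
        rintro _ ⟨q, ⟨hq, -, hqt⟩, rfl⟩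
        exact htmin q hq hqt)
    (Finset.mem_image_of_mem ι2 (Finset.mem_filter.2 ⟨hp, hfp, hpt⟩)) hlt
  obtain ⟨v, hv, rfl⟩ := Finset.mem_image.1 hvA
  obtain ⟨hvS, hfv, hvt⟩ := Finset.mem_filter.1 hv
  set g := k - ρ • f
  have hgP : g (ι2 P) < g (ι2 t) := by
    simp only [g, LinearMap.sub_apply, LinearMap.smul_apply, smul_eq_mul]; nlinarith
  have hgQ : g (ι2 Q) < g (ι2 t) := by
    simp only [g, LinearMap.sub_apply, LinearMap.smul_apply, smul_eq_mul]; nlinarith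
  have hlevel : ∀ y ∈ convexHull ℝ (ι2 '' ↑S), f y = f (ι2 P) → g y ≤ g (ι2 t) :=
    fun y hy hfy => (convex_halfSpace_le g.isLinear _).segment_subset hgP.le hgQ.le
      (h.mem_segment_of_apply_eq hΔ hP hQ hPQ hf hfPQ hy hfy)
  have hg : ∀ x ∈ convexHull ℝ (ι2 '' ↑S), g x ≤ g (ι2 t) := by
    refine fun x => apply_le_of_mem_convexHull_image fun q hq => ?_
    by_cases hqt : q = t
    · rw [hqt]
    by_cases hfq : f (ι2 q) < f (ι2 P)
    · exact hgA _ (Finset.mem_image_of_mem ι2 (Finset.mem_filter.2 ⟨hq, hfq, hqt⟩))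
    · exact hΔ.apply_le_of_apply_le_on_level hlevel (hmem v hvS) (hmem q hq) hfv
        (not_lt.1 hfq) hgv
  rcases h.apply_eq_or_apply_eq hΔ hP hQ (hmem t ht) (hmem v hvS) (Ne.symm hvt) hg rfl hgv
    with h' | h'
  exacts [hgP.ne h', hgQ.ne h']

theorem mem_convexHull_triple (h : DilationCondition (convexHull ℝ (ι2 '' ↑S)) P Q)
    (hP : ι2 P ∈ convexHull ℝ (ι2 '' ↑S)) (hQ : ι2 Q ∈ convexHull ℝ (ι2 '' ↑S)) (hPQ : P ≠ Q)
    {f : (ℝ × ℝ) →ₗ[ℝ] ℝ} (hf : f ≠ 0) (hfPQ : f (ι2 P) = f (ι2 Q)) {t : ℤ × ℤ} (ht : t ∈ S)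
    (htmin : ∀ p ∈ S, f (ι2 t) ≤ f (ι2 p)) (htP : f (ι2 t) < f (ι2 P)) {p : ℤ × ℤ}
    (hp : p ∈ S) (hfp : f (ι2 p) < f (ι2 P)) :
    ι2 p ∈ convexHull ℝ {ι2 P, ι2 Q, ι2 t} := by
  set T := ι2 t
  have htmin' : ∀ q ∈ S, q ≠ t → f T < f (ι2 q) := fun q hq hqt =>
    (htmin q hq).lt_of_ne fun heq => hqt (h.eq_of_apply_eq_min hP hQ hfPQ ht htmin htP hq heq.symm)
  have hli := linearIndependent_pair_sub_of_apply_eq (ι2_injective.ne hPQ) hfPQ htP.ne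
  set b := basisOfLinearIndependentOfCardEqFinrank hli (by simp)
  have hrepr : ι2 p = T + b.coord 0 (ι2 p - T) • (ι2 P - T) +
      b.coord 1 (ι2 p - T) • (ι2 Q - T) := by
    have := b.sum_repr (ι2 p - T)
    simp only [Fin.sum_univ_two, b, coe_basisOfLinearIndependentOfCardEqFinrank,
      Matrix.cons_val_zero, Matrix.cons_val_one] at this
    rw [Module.Basis.coord_apply, Module.Basis.coord_apply, add_assoc, this, add_sub_cancel]
  have hcoord : ∀ i, 0 ≤ b.coord i (ι2 p - T) := by
    intro i
    have hbasis : ∀ j, 0 ≤ b.coord i (b j) := fun j => by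
      rw [Module.Basis.coord_apply, Module.Basis.repr_self, Finsupp.single_apply]
      split_ifs <;> norm_num
    have hk := h.apply_le_of_apply_lt hP hQ hPQ hf hfPQ ht htmin' htP (k := -b.coord i)
      (by simpa [b, sub_nonneg] using hbasis 0) (by simpa [b, sub_nonneg] using hbasis 1) hp hfp
    simpa [sub_nonneg] using hk
  set α := b.coord 0 (ι2 p - T)
  set β := b.coord 1 (ι2 p - T)
  have hsum : α + β ≤ 1 := by
    have hfp' := congrArg f hrepr
    simp only [map_add, map_smul, map_sub, smul_eq_mul, ← hfPQ] at hfp'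
    nlinarith
  have hmem : ∀ x ∈ ({ι2 P, ι2 Q, T} : Set (ℝ × ℝ)), x ∈ convexHull ℝ {ι2 P, ι2 Q, T} :=
    fun x hx => subset_convexHull ℝ _ hx
  rw [hrepr]
  convert (convex_convexHull ℝ _).smul_add_smul_add_smul_mem (hmem (ι2 P) (by simp))
    (hmem (ι2 Q) (by simp)) (hmem T (by simp)) (hcoord 0) (hcoord 1) (sub_nonneg.2 hsum)
    (c := 1 - (α + β)) (by ring) using 1
  module

end DilationCondition

theorem stmt2_general (Δ : Set (ℝ × ℝ)) (hΔ : IsLatticePolygon Δ)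
    (P Q : ℤ × ℤ) (hP : ι2 P ∈ Δ) (hQ : ι2 Q ∈ Δ) (hPQ : P ≠ Q)
    (hyp : ∀ q : ℕ, 1 ≤ q →
      transl ((q : ℝ) • Δ) (ι2 P) ∩ transl ((q : ℝ) • Δ) (ι2 Q) ∩ Set.range ι2
        ⊆ ((q : ℝ) - 1) • Δ) :
    IsQuadrangleOpp Δ (ι2 P) (ι2 Q) := by
  obtain ⟨S, rfl⟩ := hΔ
  have h : DilationCondition _ P Q := hyp
  intro f hf hfPQ
  obtain ⟨T, hT, hfT, hS⟩ : ∃ T ∈ convexHull ℝ (ι2 '' ↑S), f T ≤ f (ι2 P) ∧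
      ∀ p ∈ S, f (ι2 p) < f (ι2 P) → ι2 p ∈ convexHull ℝ {ι2 P, ι2 Q, T} := by
    by_cases hlow : ∃ p ∈ S, f (ι2 p) < f (ι2 P)
    · obtain ⟨p, hp, hfp⟩ := hlow
      obtain ⟨t, ht, htmin⟩ := S.exists_min_image (fun p => f (ι2 p)) ⟨p, hp⟩
      have htP : f (ι2 t) < f (ι2 P) := (htmin p hp).trans_lt hfp
      exact ⟨ι2 t, subset_convexHull ℝ _ ⟨t, ht, rfl⟩, htP.le,
        fun q hq hfq => h.mem_convexHull_triple hP hQ hPQ hf hfPQ ht htmin htP hq hfq⟩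
    · exact ⟨ι2 Q, hQ, hfPQ.ge, fun p hp hfp => (hlow ⟨p, hp, hfp⟩).elim⟩
  refine ⟨T, halfSpace_inter_convexHull_eq_convexHull_triple
    (fun _ => h.mem_segment_of_apply_eq (convex_convexHull ℝ _) hP hQ hPQ hf hfPQ)
    hP hQ hT hfPQ.symm hfT ?_⟩
  rintro _ ⟨p, hp, rfl⟩ hfp
  exact hS p hp hfp

/-- if `(qΔ − P) ∩ (qΔ − Q) ∩ ℤ² ⊆ (q−1)Δ` for every integer `q ≥ 1`,
then `Δ` is a (possibly degenerate) quadrangle with opposite vertices `P` and `Q`. -/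
theorem stmt2 (Δ : Set (ℝ × ℝ)) (hΔ : IsLatticePolygon Δ) (h2 : (interior Δ).Nonempty)
    (P Q : ℤ × ℤ) (hP : ι2 P ∈ Δ) (hQ : ι2 Q ∈ Δ) (hPQ : P ≠ Q)
    (hyp : ∀ q : ℕ, 1 ≤ q →
      transl ((q : ℝ) • Δ) (ι2 P) ∩ transl ((q : ℝ) • Δ) (ι2 Q) ∩ Set.range ι2
        ⊆ ((q : ℝ) - 1) • Δ) :
    IsQuadrangleOpp Δ (ι2 P) (ι2 Q) :=
  stmt2_general Δ hΔ P Q hP hQ hPQ hyp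
end
end

section
/- Let Δ be a two-dimensional lattice polygon that is a (possibly degenerate) quadrangle with opposite vertices P and Q, where P, Q are distinct lattice points of Δ. Then (2Δ − P) ∩ (2Δ − Q) ⊆ Δ. -/
open scoped Pointwise

noncomputable section

lemma key (P Q T a b x : ℝ × ℝ) (f : (ℝ × ℝ) →ₗ[ℝ] ℝ)
    (hPQ : P ≠ Q) (hfPQ : f P = f Q) (hfT : f T ≠ f P)
    (ha : a ∈ convexHull ℝ ({P, Q, T} : Set (ℝ × ℝ)))
    (hb : b ∈ convexHull ℝ ({P, Q, T} : Set (ℝ × ℝ)))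
    (hxa : x = (2:ℝ) • a - P) (hxb : x = (2:ℝ) • b - Q) :
    x ∈ convexHull ℝ ({P, Q, T} : Set (ℝ × ℝ)) := by
  have hPm : P ∈ convexHull ℝ ({P, Q, T} : Set (ℝ × ℝ)) := subset_convexHull ℝ _ (by simp)
  have hQm : Q ∈ convexHull ℝ ({P, Q, T} : Set (ℝ × ℝ)) := subset_convexHull ℝ _ (by simp)
  have hsub1 : ({Q, T} : Set (ℝ × ℝ)) ⊆ {P, Q, T} := by intro y hy; simp at hy ⊢; tauto
  have hsub2 : ({P, T} : Set (ℝ × ℝ)) ⊆ {P, Q, T} := by intro y hy; simp at hy ⊢; tauto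
  -- decompose a
  have ha' : a ∈ convexHull ℝ (insert P ({Q, T} : Set (ℝ × ℝ))) := ha
  rw [convexHull_insert ⟨Q, by simp⟩, mem_convexJoin] at ha'
  obtain ⟨p, hp, z, hz, haz⟩ := ha'
  rw [Set.mem_singleton_iff] at hp
  rw [hp] at haz; clear hp p
  have hzm : z ∈ convexHull ℝ ({P, Q, T} : Set (ℝ × ℝ)) := convexHull_mono hsub1 hz
  rw [convexHull_pair] at hz
  obtain ⟨u, v, hu, hv, huv, hav⟩ := haz
  obtain ⟨c, d, hc, hd, hcd, hzv⟩ := hz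
  -- decompose b
  have hb' : b ∈ convexHull ℝ (insert Q ({P, T} : Set (ℝ × ℝ))) := by
    rwa [show ({P, Q, T} : Set (ℝ × ℝ)) = insert Q ({P, T} : Set (ℝ × ℝ)) from
      Set.insert_comm P Q {T}] at hb
  rw [convexHull_insert ⟨P, by simp⟩, mem_convexJoin] at hb'
  obtain ⟨q, hq, w, hw, hbw⟩ := hb'
  rw [Set.mem_singleton_iff] at hq
  rw [hq] at hbw; clear hq q
  have hwm : w ∈ convexHull ℝ ({P, Q, T} : Set (ℝ × ℝ)) := convexHull_mono hsub2 hw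
  rw [convexHull_pair] at hw
  obtain ⟨u', v', hu', hv', huv', hbv⟩ := hbw
  obtain ⟨e, g, he, hg, heg, hwv⟩ := hw
  rcases le_or_gt v (1/2) with hcase | hcase1
  · -- x ∈ segment P z
    refine (convex_convexHull ℝ _).segment_subset hPm hzm ?_
    refine ⟨1 - 2*v, 2*v, by linarith, by linarith, by ring, ?_⟩
    rw [hxa, ← hav]
    have huu : u = 1 - v := by linarith
    subst huu
    module
  rcases le_or_gt v' (1/2) with hcase | hcase2
  · refine (convex_convexHull ℝ _).segment_subset hQm hwm ?_
    refine ⟨1 - 2*v', 2*v', by linarith, by linarith, by ring, ?_⟩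
    rw [hxb, ← hbv]
    have huu : u' = 1 - v' := by linarith
    subst huu
    module
  · exfalso
    have huu : u = 1 - v := by linarith
    have huu' : u' = 1 - v' := by linarith
    have hcc : c = 1 - d := by linarith
    have hee : e = 1 - g := by linarith
    subst huu huu' hcc hee
    rw [← hzv] at hav
    rw [← hwv] at hbv
    rw [← hav] at hxa
    rw [← hbv] at hxb
    have E : (2:ℝ) • ((1 - v) • P + v • ((1 - d) • Q + d • T)) - P
        = (2:ℝ) • ((1 - v') • Q + v' • ((1 - g) • P + g • T)) - Q := by
      rw [← hxa, ← hxb]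
    have hE := congrArg f E
    simp only [map_sub, map_add, map_smul, smul_eq_mul] at hE
    rw [← hfPQ] at hE
    have h1 : (v*d - v'*g) * (f T - f P) = 0 := by linear_combination hE/2
    have hvd : v*d = v'*g := by
      rcases mul_eq_zero.mp h1 with h | h
      · linarith
      · exact absurd (by linarith : f T = f P) hfT
    rw [Prod.ext_iff] at E
    obtain ⟨E1, E2⟩ := E
    simp only [Prod.fst_sub, Prod.snd_sub, Prod.fst_add, Prod.snd_add, Prod.smul_fst,
      Prod.smul_snd, smul_eq_mul] at E1 E2
    have hA1 : (1 - 2*v - 2*v' + 2*v'*g) * (P.1 - Q.1) = 0 := by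
      linear_combination E1 + (2*Q.1 - 2*T.1) * hvd
    have hA2 : (1 - 2*v - 2*v' + 2*v'*g) * (P.2 - Q.2) = 0 := by
      linear_combination E2 + (2*Q.2 - 2*T.2) * hvd
    have hA : (1 - 2*v - 2*v' + 2*v'*g) = 0 := by
      by_contra hA
      apply hPQ
      have h1' : P.1 = Q.1 := by
        rcases mul_eq_zero.mp hA1 with h | h
        · exact absurd h hA
        · linarith
      have h2' : P.2 = Q.2 := by
        rcases mul_eq_zero.mp hA2 with h | h
        · exact absurd h hA
        · linarith
      exact Prod.ext h1' h2'
    nlinarith [mul_nonneg (by linarith : (0:ℝ) ≤ v') (by linarith : (0:ℝ) ≤ 1 - g)]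

lemma plane_int_empty (f : (ℝ × ℝ) →ₗ[ℝ] ℝ) (hf : f ≠ 0) (r : ℝ) :
    interior {z : ℝ × ℝ | f z = r} = ∅ := by
  by_contra h
  obtain ⟨z, hz⟩ := Set.nonempty_iff_ne_empty.mpr h
  obtain ⟨v, hv⟩ : ∃ v, f v ≠ 0 := by
    by_contra hc; push_neg at hc
    exact hf (LinearMap.ext fun w => by simp [hc])
  have hv0 : v ≠ 0 := fun h0 => hv (by simp [h0])
  have hzr : z ∈ {z : ℝ × ℝ | f z = r} := interior_subset hz
  rw [Set.mem_setOf_eq] at hzr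
  rw [mem_interior_iff_mem_nhds, Metric.mem_nhds_iff] at hz
  obtain ⟨ε, hε, hball⟩ := hz
  set δ : ℝ := ε / (2 * ‖v‖) with hδ
  have hnv : (0:ℝ) < ‖v‖ := norm_pos_iff.mpr hv0
  have hδ0 : 0 < δ := by positivity
  have hmem : z + δ • v ∈ {z : ℝ × ℝ | f z = r} := by
    apply hball
    rw [Metric.mem_ball, dist_eq_norm]
    have : z + δ • v - z = δ • v := by abel
    rw [this, norm_smul, Real.norm_eq_abs, abs_of_pos hδ0]
    rw [hδ]
    rw [div_mul_eq_mul_div]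
    rw [div_lt_iff₀ (by positivity)]
    nlinarith
  have : f (z + δ • v) = r := hmem
  rw [map_add, map_smul, smul_eq_mul, hzr] at this
  have : δ * f v = 0 := by linarith
  rcases mul_eq_zero.mp this with h' | h'
  · linarith
  · exact hv h'

lemma aux (Δ : Set (ℝ × ℝ)) (P Q a b x : ℝ × ℝ) (hPQ : P ≠ Q)
    (hquad : IsQuadrangleOpp Δ P Q) (hint : (interior Δ).Nonempty)
    (haΔ : a ∈ Δ) (hbΔ : b ∈ Δ) (hxa : x = (2:ℝ) • a - P) (hxb : x = (2:ℝ) • b - Q)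
    (f : (ℝ × ℝ) →ₗ[ℝ] ℝ) (hf : f ≠ 0) (hfPQ : f P = f Q) (hx : f x ≤ f P) :
    x ∈ Δ := by
  obtain ⟨T₁, hT₁⟩ := hquad f hf hfPQ
  obtain ⟨T₂, hT₂⟩ := hquad (-f) (neg_ne_zero.mpr hf) (by simp [hfPQ])
  have hfxa : f x = 2 * f a - f P := by
    rw [hxa, map_sub, map_smul, smul_eq_mul]
  have hfxb : f x = 2 * f b - f P := by
    rw [hxb, map_sub, map_smul, smul_eq_mul, hfPQ]
  have hfa : f a ≤ f P := by linarith
  have hfb : f b ≤ f P := by linarith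
  have haT₁ : a ∈ convexHull ℝ ({P, Q, T₁} : Set (ℝ × ℝ)) := by
    rw [← hT₁]; exact ⟨hfa, haΔ⟩
  have hbT₁ : b ∈ convexHull ℝ ({P, Q, T₁} : Set (ℝ × ℝ)) := by
    rw [← hT₁]; exact ⟨hfb, hbΔ⟩
  by_cases hT1c : f T₁ = f P
  · -- conv{P,Q,T₁} lies in the hyperplane
    have h1plane : convexHull ℝ ({P, Q, T₁} : Set (ℝ × ℝ)) ⊆ {z | f z = f P} := by
      apply convexHull_min ?_ (convex_hyperplane (f.isLinear) (f P))
      intro y hy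
      simp only [Set.mem_insert_iff, Set.mem_singleton_iff] at hy
      rcases hy with h | h | h <;> subst h
      · rfl
      · exact hfPQ.symm
      · exact hT1c
    by_cases hT2c : f T₂ = f P
    · exfalso
      have h2plane : convexHull ℝ ({P, Q, T₂} : Set (ℝ × ℝ)) ⊆ {z | f z = f P} := by
        apply convexHull_min ?_ (convex_hyperplane (f.isLinear) (f P))
        intro y hy
        simp only [Set.mem_insert_iff, Set.mem_singleton_iff] at hy
        rcases hy with h | h | h <;> subst h
        · rfl
        · exact hfPQ.symm
        · exact hT2c
      have hΔsub : Δ ⊆ {z : ℝ × ℝ | f z = f P} := by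
        intro z hz
        rcases le_total (f z) (f P) with h | h
        · exact h1plane (by rw [← hT₁]; exact ⟨h, hz⟩)
        · refine h2plane ?_
          rw [← hT₂]
          refine ⟨?_, hz⟩
          show (-f) z ≤ (-f) P
          simp only [LinearMap.neg_apply]
          linarith
      obtain ⟨z, hz⟩ := hint
      have := interior_mono hΔsub hz
      rw [plane_int_empty f hf (f P)] at this
      exact this
    · -- use T₂
      have hfa' : f a = f P := h1plane haT₁
      have hfb' : f b = f P := h1plane hbT₁
      have haT₂ : a ∈ convexHull ℝ ({P, Q, T₂} : Set (ℝ × ℝ)) := by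
        rw [← hT₂]
        refine ⟨?_, haΔ⟩
        show -f a ≤ -f P
        simp [hfa']
      have hbT₂ : b ∈ convexHull ℝ ({P, Q, T₂} : Set (ℝ × ℝ)) := by
        rw [← hT₂]
        refine ⟨?_, hbΔ⟩
        show -f b ≤ -f P
        simp [hfb']
      have hT2c' : (-f) T₂ ≠ (-f) P := by
        simp only [LinearMap.neg_apply, ne_eq, neg_inj]
        exact hT2c
      have hx' := key P Q T₂ a b x (-f) hPQ (by simp [hfPQ]) hT2c' haT₂ hbT₂ hxa hxb
      rw [← hT₂] at hx'
      exact hx'.2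
  · have hx' := key P Q T₁ a b x f hPQ hfPQ hT1c haT₁ hbT₁ hxa hxb
    rw [← hT₁] at hx'
    exact hx'.2

/-- if `Δ` is a (possibly degenerate) quadrangle with opposite vertices
`P` and `Q`, then `(2Δ − P) ∩ (2Δ − Q) ⊆ Δ`. -/
theorem stmt3 (Δ : Set (ℝ × ℝ)) (hΔ : IsLatticePolygon Δ) (h2 : (interior Δ).Nonempty)
    (P Q : ℤ × ℤ) (hP : ι2 P ∈ Δ) (hQ : ι2 Q ∈ Δ) (hPQ : P ≠ Q)
    (hquad : IsQuadrangleOpp Δ (ι2 P) (ι2 Q)) :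
    transl ((2 : ℝ) • Δ) (ι2 P) ∩ transl ((2 : ℝ) • Δ) (ι2 Q) ⊆ Δ := by
  intro x hx
  obtain ⟨hx1, hx2⟩ := hx
  obtain ⟨y1, hy1, hxy1⟩ := hx1
  obtain ⟨y2, hy2, hxy2⟩ := hx2
  obtain ⟨a, haΔ, ha2⟩ := hy1
  obtain ⟨b, hbΔ, hb2⟩ := hy2
  dsimp only at hxy1 hxy2 ha2 hb2
  have hxa : x = (2:ℝ) • a - ι2 P := by rw [← hxy1, ← ha2]
  have hxb : x = (2:ℝ) • b - ι2 Q := by rw [← hxy2, ← hb2]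
  have hPQ' : ι2 P ≠ ι2 Q := by
    intro h
    apply hPQ
    unfold ι2 at h
    rw [Prod.ext_iff] at h ⊢
    exact ⟨Int.cast_injective h.1, Int.cast_injective h.2⟩
  set u : ℝ × ℝ := ι2 Q - ι2 P with hu
  have hu0 : u ≠ 0 := sub_ne_zero.mpr (Ne.symm hPQ')
  set f : (ℝ × ℝ) →ₗ[ℝ] ℝ :=
    (-u.2) • LinearMap.fst ℝ ℝ ℝ + u.1 • LinearMap.snd ℝ ℝ ℝ with hfdef
  have hfapp : ∀ z : ℝ × ℝ, f z = -u.2 * z.1 + u.1 * z.2 := by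
    intro z
    simp [hfdef, smul_eq_mul]
  have hf0 : f ≠ 0 := by
    intro h
    have h1 : f (-u.2, u.1) = 0 := by rw [h]; rfl
    rw [hfapp] at h1
    simp only at h1
    have : u.1 = 0 ∧ u.2 = 0 := by constructor <;> nlinarith
    exact hu0 (Prod.ext this.1 this.2)
  have hfPQ : f (ι2 P) = f (ι2 Q) := by
    rw [hfapp, hfapp, hu]
    simp only [Prod.fst_sub, Prod.snd_sub]
    ring
  rcases le_total (f x) (f (ι2 P)) with hc | hc
  · exact aux Δ (ι2 P) (ι2 Q) a b x hPQ' hquad h2 haΔ hbΔ hxa hxb f hf0 hfPQ hc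
  · refine aux Δ (ι2 P) (ι2 Q) a b x hPQ' hquad h2 haΔ hbΔ hxa hxb (-f)
      (neg_ne_zero.mpr hf0) (by simp [hfPQ]) ?_
    simp only [LinearMap.neg_apply]
    linarith
end
end

section
/- Let k be a field of characteristic zero, let Δ be a two-dimensional lattice polygon, and let P, Q, R be three distinct lattice points of Δ. If each of the two-term sequences (x^{(P,1)}, x^{(Q,1)}), (x^{(Q,1)}, x^{(R,1)}) and (x^{(P,1)}, x^{(R,1)}) is weakly regular on R_Δ, then the three-term sequence x^{(P,1)}, x^{(Q,1)}, x^{(R,1)} is weakly regular on R_Δ. -/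
open scoped Pointwise

noncomputable section

/-- `C` is the monoid `C_Δ = {(v, q) ∈ ℤ² × ℕ : v ∈ qΔ}`. -/
def IsPolygonMonoid (Δ : Set (ℝ × ℝ)) (C : AddSubmonoid ((ℤ × ℤ) × ℕ)) : Prop :=
  ∀ (v : ℤ × ℤ) (q : ℕ), ((v, q) ∈ C ↔ ι2 v ∈ (q : ℝ) • Δ)

/-! In the monoid algebra of a cancellative commutative monoid `G`, a monomial `x^r` is a
nonzerodivisor modulo the ideal generated by the monomials `x^s`, `s ∈ S`, exactly when
`r + m ∈ S + G` implies `m ∈ S + G` for all exponents `m`, since membership in a monomial ideal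
is decided monomial by monomial. This condition for `S ∪ T` follows from the conditions for `S`
and for `T`; with `S = {P}`, `T = {Q}` it shows that `x^R` is regular modulo `(x^P, x^Q)` as
soon as it is regular modulo `(x^P)` and modulo `(x^Q)`. -/

namespace AddMonoidAlgebra

variable {k G : Type*}

theorem of'_mul_mem_span_of'_image_iff [Semiring k] [AddCommMonoid G] [IsLeftCancelAdd G]
    {s : Set G} (r : G) (f : AddMonoidAlgebra k G) :
    of' k G r * f ∈ Ideal.span (of' k G '' s) ↔
      ∀ m ∈ f.coeff.support, ∃ m' ∈ s, ∃ d, r + m = d + m' := by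
  rw [mem_ideal_span_of'_image, of'_apply, support_coeff_single_mul f 1 (by simp) r]
  simp

variable [CommRing k] [AddCommMonoid G] [IsLeftCancelAdd G]

theorem isSMulRegular_quotient_span_of'_image_iff [Nontrivial k] {s : Set G} (r : G) :
    IsSMulRegular (AddMonoidAlgebra k G ⧸ Ideal.span (of' k G '' s)) (of' k G r) ↔
      ∀ m, (∃ m' ∈ s, ∃ d, r + m = d + m') → ∃ m' ∈ s, ∃ d, m = d + m' := by
  rw [isSMulRegular_quotient_iff_mem_of_smul_mem]
  refine ⟨fun h m hm => ?_, fun h f hf => ?_⟩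
  · have hsingle : (single m (1 : k)).coeff.support = {m} := Finsupp.support_single _ one_ne_zero
    have hmem := h (single m 1)
    rw [smul_eq_mul, of'_mul_mem_span_of'_image_iff, hsingle, mem_ideal_span_of'_image,
      hsingle] at hmem
    simpa using hmem (by simpa using hm)
  · rw [smul_eq_mul, of'_mul_mem_span_of'_image_iff] at hf
    exact mem_ideal_span_of'_image.2 fun m hm => h m (hf m hm)

theorem isSMulRegular_quotient_span_of'_image_union [Nontrivial k] {s t : Set G} {r : G}
    (hs : IsSMulRegular (AddMonoidAlgebra k G ⧸ Ideal.span (of' k G '' s)) (of' k G r))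
    (ht : IsSMulRegular (AddMonoidAlgebra k G ⧸ Ideal.span (of' k G '' t)) (of' k G r)) :
    IsSMulRegular (AddMonoidAlgebra k G ⧸ Ideal.span (of' k G '' (s ∪ t))) (of' k G r) := by
  rw [isSMulRegular_quotient_span_of'_image_iff] at hs ht ⊢
  rintro m ⟨m', hm' | hm', d, hmd⟩
  · obtain ⟨n, hn, e, rfl⟩ := hs m ⟨m', hm', d, hmd⟩
    exact ⟨n, Or.inl hn, e, rfl⟩
  · obtain ⟨n, hn, e, rfl⟩ := ht m ⟨m', hm', d, hmd⟩
    exact ⟨n, Or.inr hn, e, rfl⟩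

theorem isSMulRegular_quotient_span_singleton_sup [Nontrivial k] {p q r : G}
    (hp : IsSMulRegular (AddMonoidAlgebra k G ⧸ Ideal.span {of' k G p}) (of' k G r))
    (hq : IsSMulRegular (AddMonoidAlgebra k G ⧸ Ideal.span {of' k G q}) (of' k G r)) :
    IsSMulRegular (AddMonoidAlgebra k G ⧸ (Ideal.span {of' k G p} ⊔ Ideal.span {of' k G q}))
      (of' k G r) := by
  have h := isSMulRegular_quotient_span_of'_image_union (s := {p}) (t := {q})
    (by rwa [Set.image_singleton]) (by rwa [Set.image_singleton])
  rwa [Set.image_union, Ideal.span_union, Set.image_singleton, Set.image_singleton] at h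

end AddMonoidAlgebra

theorem RingTheory.Sequence.isWeaklyRegular_append_singleton_iff {R : Type*} [CommRing R]
    (rs : List R) (r : R) :
    IsWeaklyRegular R (rs ++ [r]) ↔
      IsWeaklyRegular R rs ∧ IsSMulRegular (R ⧸ Ideal.ofList rs) r := by
  rw [isWeaklyRegular_append_iff, isWeaklyRegular_singleton_iff, Ideal.smul_eq_mul, Ideal.mul_top]

theorem stmt7_general (k : Type*) [Field k]
    (C : AddSubmonoid ((ℤ × ℤ) × ℕ))
    (P Q R : ℤ × ℤ)
    (hPC : ((P, 1) : (ℤ × ℤ) × ℕ) ∈ C) (hQC : ((Q, 1) : (ℤ × ℤ) × ℕ) ∈ C)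
    (hRC : ((R, 1) : (ℤ × ℤ) × ℕ) ∈ C)
    (hPQreg : RingTheory.Sequence.IsWeaklyRegular (AddMonoidAlgebra k ↥C)
      [AddMonoidAlgebra.single (⟨(P, 1), hPC⟩ : ↥C) (1 : k),
       AddMonoidAlgebra.single (⟨(Q, 1), hQC⟩ : ↥C) (1 : k)])
    (hQRreg : RingTheory.Sequence.IsWeaklyRegular (AddMonoidAlgebra k ↥C)
      [AddMonoidAlgebra.single (⟨(Q, 1), hQC⟩ : ↥C) (1 : k),
       AddMonoidAlgebra.single (⟨(R, 1), hRC⟩ : ↥C) (1 : k)])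
    (hPRreg : RingTheory.Sequence.IsWeaklyRegular (AddMonoidAlgebra k ↥C)
      [AddMonoidAlgebra.single (⟨(P, 1), hPC⟩ : ↥C) (1 : k),
       AddMonoidAlgebra.single (⟨(R, 1), hRC⟩ : ↥C) (1 : k)]) :
    RingTheory.Sequence.IsWeaklyRegular (AddMonoidAlgebra k ↥C)
      [AddMonoidAlgebra.single (⟨(P, 1), hPC⟩ : ↥C) (1 : k),
       AddMonoidAlgebra.single (⟨(Q, 1), hQC⟩ : ↥C) (1 : k),
       AddMonoidAlgebra.single (⟨(R, 1), hRC⟩ : ↥C) (1 : k)] := by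
  open RingTheory.Sequence in
  have hwP := ((isWeaklyRegular_append_singleton_iff [_] _).1 hPRreg).2
  have hwQ := ((isWeaklyRegular_append_singleton_iff [_] _).1 hQRreg).2
  refine (isWeaklyRegular_append_singleton_iff [_, _] _).2 ⟨hPQreg, ?_⟩
  rw [Ideal.ofList_singleton] at hwP hwQ
  rw [Ideal.ofList_cons, Ideal.ofList_singleton]
  exact AddMonoidAlgebra.isSMulRegular_quotient_span_singleton_sup hwP hwQ

/-- if each of the two-term sequences `(x^{(P,1)}, x^{(Q,1)})`,
`(x^{(Q,1)}, x^{(R,1)})` and `(x^{(P,1)}, x^{(R,1)})` is weakly regular on `R_Δ = k[C_Δ]`,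
then so is the three-term sequence `x^{(P,1)}, x^{(Q,1)}, x^{(R,1)}`. -/
theorem stmt7 (k : Type*) [Field k] [CharZero k]
    (Δ : Set (ℝ × ℝ)) (hΔ : IsLatticePolygon Δ) (h2 : (interior Δ).Nonempty)
    (C : AddSubmonoid ((ℤ × ℤ) × ℕ)) (hC : IsPolygonMonoid Δ C)
    (P Q R : ℤ × ℤ) (hP : ι2 P ∈ Δ) (hQ : ι2 Q ∈ Δ) (hR : ι2 R ∈ Δ)
    (hPQ : P ≠ Q) (hPR : P ≠ R) (hQR : Q ≠ R)
    (hPC : ((P, 1) : (ℤ × ℤ) × ℕ) ∈ C) (hQC : ((Q, 1) : (ℤ × ℤ) × ℕ) ∈ C)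
    (hRC : ((R, 1) : (ℤ × ℤ) × ℕ) ∈ C)
    (hPQreg : RingTheory.Sequence.IsWeaklyRegular (AddMonoidAlgebra k ↥C)
      [AddMonoidAlgebra.single (⟨(P, 1), hPC⟩ : ↥C) (1 : k),
       AddMonoidAlgebra.single (⟨(Q, 1), hQC⟩ : ↥C) (1 : k)])
    (hQRreg : RingTheory.Sequence.IsWeaklyRegular (AddMonoidAlgebra k ↥C)
      [AddMonoidAlgebra.single (⟨(Q, 1), hQC⟩ : ↥C) (1 : k),
       AddMonoidAlgebra.single (⟨(R, 1), hRC⟩ : ↥C) (1 : k)])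
    (hPRreg : RingTheory.Sequence.IsWeaklyRegular (AddMonoidAlgebra k ↥C)
      [AddMonoidAlgebra.single (⟨(P, 1), hPC⟩ : ↥C) (1 : k),
       AddMonoidAlgebra.single (⟨(R, 1), hRC⟩ : ↥C) (1 : k)]) :
    RingTheory.Sequence.IsWeaklyRegular (AddMonoidAlgebra k ↥C)
      [AddMonoidAlgebra.single (⟨(P, 1), hPC⟩ : ↥C) (1 : k),
       AddMonoidAlgebra.single (⟨(Q, 1), hQC⟩ : ↥C) (1 : k),
       AddMonoidAlgebra.single (⟨(R, 1), hRC⟩ : ↥C) (1 : k)] :=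
  stmt7_general k C P Q R hPC hQC hRC hPQreg hQRreg hPRreg
end
end

section
/- For every natural number N, every integer ℓ with 1 ≤ ℓ ≤ N − 2, and every real number v, one has ∑_{j=0}^{ℓ+1} (−1)^{j+1} · C(N, ℓ+1−j) · (v·j² + (N − v − 1)·j + 1) = ℓ·C(N−1, ℓ+1) − 2v·C(N−3, ℓ−1), as an equality of real numbers, where C(a,b) denotes the binomial coefficient a choose b. -/
lemma alt_sum (n : ℕ) : ∀ m : ℕ,
    ∑ k ∈ Finset.range (m + 1), (-1 : ℝ) ^ k * ((n + 1).choose k : ℝ)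
      = (-1 : ℝ) ^ m * (n.choose m : ℝ) := by
  intro m
  induction m with
  | zero => simp
  | succ m ih =>
    rw [Finset.sum_range_succ, ih, Nat.choose_succ_succ n m]
    push_cast
    ring

lemma L1 (n m : ℕ) :
    ∑ k ∈ Finset.range (m + 2), (-1 : ℝ) ^ k * (k : ℝ) * ((n + 2).choose k : ℝ)
      = (-1 : ℝ) ^ (m + 1) * ((n : ℝ) + 2) * (n.choose m : ℝ) := by
  rw [Finset.sum_range_succ']
  have key : ∀ k ∈ Finset.range (m + 1),
      (-1 : ℝ) ^ (k + 1) * ((k + 1 : ℕ) : ℝ) * ((n + 2).choose (k + 1) : ℝ)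
        = (-((n : ℝ) + 2)) * ((-1 : ℝ) ^ k * ((n + 1).choose k : ℝ)) := by
    intro k _
    have hnat : (n + 2) * (n + 1).choose k = (n + 2).choose (k + 1) * (k + 1) :=
      Nat.add_one_mul_choose_eq (n + 1) k
    have h2 : ((n : ℝ) + 2) * ((n + 1).choose k : ℝ)
        = ((n + 2).choose (k + 1) : ℝ) * ((k : ℝ) + 1) := by exact_mod_cast hnat
    push_cast
    linear_combination ((-1 : ℝ) ^ k) * h2
  rw [Finset.sum_congr rfl key, ← Finset.mul_sum, alt_sum n m]
  simp
  ring

lemma L2 (n m : ℕ) :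
    ∑ k ∈ Finset.range (m + 3), (-1 : ℝ) ^ k * (k : ℝ) ^ 2 * ((n + 3).choose k : ℝ)
      = (-1 : ℝ) ^ m * ((n : ℝ) + 3) *
          (((n : ℝ) + 2) * (n.choose m : ℝ) + ((n + 1).choose (m + 1) : ℝ)) := by
  rw [Finset.sum_range_succ']
  have key : ∀ k ∈ Finset.range (m + 2),
      (-1 : ℝ) ^ (k + 1) * ((k + 1 : ℕ) : ℝ) ^ 2 * ((n + 3).choose (k + 1) : ℝ)
        = (-((n : ℝ) + 3)) * ((-1 : ℝ) ^ k * (k : ℝ) * ((n + 2).choose k : ℝ))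
          + (-((n : ℝ) + 3)) * ((-1 : ℝ) ^ k * ((n + 2).choose k : ℝ)) := by
    intro k _
    have hnat : (n + 3) * (n + 2).choose k = (n + 3).choose (k + 1) * (k + 1) :=
      Nat.add_one_mul_choose_eq (n + 2) k
    have h2 : ((n : ℝ) + 3) * ((n + 2).choose k : ℝ)
        = ((n + 3).choose (k + 1) : ℝ) * ((k : ℝ) + 1) := by exact_mod_cast hnat
    push_cast
    linear_combination ((-1 : ℝ) ^ k * ((k : ℝ) + 1)) * h2
  rw [Finset.sum_congr rfl key, Finset.sum_add_distrib, ← Finset.mul_sum, ← Finset.mul_sum,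
    L1 n m]
  have hA : ∑ k ∈ Finset.range (m + 2), (-1 : ℝ) ^ k * ((n + 2).choose k : ℝ)
      = (-1 : ℝ) ^ (m + 1) * ((n + 1).choose (m + 1) : ℝ) := by exact_mod_cast alt_sum (n + 1) (m + 1)
  rw [hA]
  simp
  ring

lemma master (n m : ℕ) (a b c : ℝ) :
    ∑ k ∈ Finset.range (m + 3), (-1 : ℝ) ^ k * ((n + 3).choose k : ℝ)
        * (a * (k : ℝ) ^ 2 + b * (k : ℝ) + c)
      = (-1 : ℝ) ^ m *
          (a * ((n : ℝ) + 3) * (((n : ℝ) + 2) * (n.choose m : ℝ) + ((n + 1).choose (m + 1) : ℝ))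
            + b * ((n : ℝ) + 3) * ((n + 1).choose (m + 1) : ℝ)
            + c * ((n + 2).choose (m + 2) : ℝ)) := by
  have key : ∀ k ∈ Finset.range (m + 3),
      (-1 : ℝ) ^ k * ((n + 3).choose k : ℝ) * (a * (k : ℝ) ^ 2 + b * (k : ℝ) + c)
        = a * ((-1 : ℝ) ^ k * (k : ℝ) ^ 2 * ((n + 3).choose k : ℝ))
          + b * ((-1 : ℝ) ^ k * (k : ℝ) * ((n + 3).choose k : ℝ))
          + c * ((-1 : ℝ) ^ k * ((n + 3).choose k : ℝ)) := fun k _ => by ring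
  rw [Finset.sum_congr rfl key, Finset.sum_add_distrib, Finset.sum_add_distrib,
    ← Finset.mul_sum, ← Finset.mul_sum, ← Finset.mul_sum, L2 n m]
  have hB : ∑ k ∈ Finset.range (m + 3), (-1 : ℝ) ^ k * (k : ℝ) * ((n + 3).choose k : ℝ)
      = (-1 : ℝ) ^ (m + 2) * ((n : ℝ) + 3) * ((n + 1).choose (m + 1) : ℝ) := by exact_mod_cast L1 (n + 1) (m + 1)
  have hC : ∑ k ∈ Finset.range (m + 3), (-1 : ℝ) ^ k * ((n + 3).choose k : ℝ)
      = (-1 : ℝ) ^ (m + 2) * ((n + 2).choose (m + 2) : ℝ) := by exact_mod_cast alt_sum (n + 2) (m + 2)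
  rw [hB, hC]
  ring

lemma neg_one_pow_sub (m k : ℕ) (h : k ≤ m) :
    (-1 : ℝ) ^ (m - k) = (-1 : ℝ) ^ m * (-1 : ℝ) ^ k := by
  have h1 : (-1 : ℝ) ^ m = (-1 : ℝ) ^ (m - k) * (-1 : ℝ) ^ k := by
    rw [← pow_add, Nat.sub_add_cancel h]
  rw [h1, mul_assoc, ← pow_add, ← two_mul, pow_mul]
  norm_num

/-- for every natural number `N`, every integer `ℓ` with `1 ≤ ℓ ≤ N − 2`,
and every real number `v`,
`∑_{j=0}^{ℓ+1} (−1)^{j+1} C(N, ℓ+1−j) (v j² + (N − v − 1) j + 1)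
  = ℓ C(N−1, ℓ+1) − 2 v C(N−3, ℓ−1)` as real numbers. -/
theorem stmt18 (N ℓ : ℕ) (hℓ1 : 1 ≤ ℓ) (hℓ2 : ℓ + 2 ≤ N) (v : ℝ) :
    ∑ j ∈ Finset.range (ℓ + 2),
        (-1 : ℝ) ^ (j + 1) * (N.choose (ℓ + 1 - j) : ℝ) *
          (v * (j : ℝ) ^ 2 + ((N : ℝ) - v - 1) * (j : ℝ) + 1)
      = (ℓ : ℝ) * ((N - 1).choose (ℓ + 1) : ℝ) - 2 * v * ((N - 3).choose (ℓ - 1) : ℝ) := by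
  obtain ⟨m, rfl⟩ : ∃ m, ℓ = m + 1 := ⟨ℓ - 1, (Nat.succ_pred_eq_of_pos hℓ1).symm⟩
  obtain ⟨n, rfl⟩ : ∃ n, N = n + 3 := ⟨N - 3, by omega⟩
  have e1 : n + 3 - 1 = n + 2 := by omega
  have e2 : n + 3 - 3 = n := by omega
  have e3 : m + 1 - 1 = m := by omega
  have e4 : m + 1 + 1 = m + 2 := by omega
  have e5 : m + 1 + 2 = m + 3 := by omega
  rw [e1, e2, e3, e4, e5]
  rw [← Finset.sum_range_reflect]
  have key : ∀ k ∈ Finset.range (m + 3),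
      (-1 : ℝ) ^ (m + 3 - 1 - k + 1) * ((n + 3).choose (m + 2 - (m + 3 - 1 - k)) : ℝ) *
          (v * ((m + 3 - 1 - k : ℕ) : ℝ) ^ 2
            + (((n + 3 : ℕ) : ℝ) - v - 1) * ((m + 3 - 1 - k : ℕ) : ℝ) + 1)
        = (-1 : ℝ) ^ (m + 1) *
            ((-1 : ℝ) ^ k * ((n + 3).choose k : ℝ) * (v * (k : ℝ) ^ 2
              + (-(2 * v * ((m : ℝ) + 2) + (((n : ℝ) + 3) - v - 1))) * (k : ℝ)
              + (v * ((m : ℝ) + 2) ^ 2 + (((n : ℝ) + 3) - v - 1) * ((m : ℝ) + 2) + 1))) := by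
    intro k hk
    have hk2 : k ≤ m + 2 := by
      have := Finset.mem_range.mp hk; omega
    have h1 : m + 3 - 1 - k = m + 2 - k := by omega
    rw [h1, Nat.sub_sub_self hk2, Nat.cast_sub hk2, pow_succ, neg_one_pow_sub (m + 2) k hk2]
    push_cast
    ring
  rw [Finset.sum_congr rfl key, ← Finset.mul_sum, master n m v
    (-(2 * v * ((m : ℝ) + 2) + (((n : ℝ) + 3) - v - 1)))
    (v * ((m : ℝ) + 2) ^ 2 + (((n : ℝ) + 3) - v - 1) * ((m : ℝ) + 2) + 1)]
  have hsign : (-1 : ℝ) ^ (m + 1) * (-1 : ℝ) ^ m = -1 := by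
    rw [← pow_add]
    exact Odd.neg_one_pow ⟨m, by omega⟩
  have h12 : ((n : ℝ) + 2) * ((n + 1).choose (m + 1) : ℝ)
      = ((n + 2).choose (m + 2) : ℝ) * ((m : ℝ) + 2) := by
    exact_mod_cast Nat.add_one_mul_choose_eq (n + 1) (m + 1)
  have h23 : ((n : ℝ) + 1) * ((n).choose m : ℝ)
      = ((n + 1).choose (m + 1) : ℝ) * ((m : ℝ) + 1) := by
    exact_mod_cast Nat.add_one_mul_choose_eq n m
  push_cast
  linear_combination
    ((v * ((n : ℝ) + 3) * (((n : ℝ) + 2) * (n.choose m : ℝ) + ((n + 1).choose (m + 1) : ℝ))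
        + (-(2 * v * ((m : ℝ) + 2) + (((n : ℝ) + 3) - v - 1))) * ((n : ℝ) + 3)
          * ((n + 1).choose (m + 1) : ℝ)
        + (v * ((m : ℝ) + 2) ^ 2 + (((n : ℝ) + 3) - v - 1) * ((m : ℝ) + 2) + 1)
          * ((n + 2).choose (m + 2) : ℝ)) * hsign)
    + (v * ((m : ℝ) + 1) + (n : ℝ) + 3) * h12 + (-(v * ((n : ℝ) + 4))) * h23
end
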